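/- The formal power series solution g = X + X²/2 + X³/2 + ⋯ of the formal equation corresponding to g' = exp(g∘g) with g(0)=0 has all coefficients nonnegative. -/

import Mathlib

open PowerSeries

/-- Composition `f ∘ g` of formal power series (intended for `g` with zero constant term):
the `n`-th coefficient only depends on the first `n + 1` terms of `f`. -/
noncomputable def PowerSeries.compose (f g : PowerSeries ℝ) : PowerSeries ℝ :=
  PowerSeries.mk fun n =>
    PowerSeries.coeff n (∑ k ∈ Finset.range (n + 1), PowerSeries.C (PowerSeries.coeff k f) * g ^ k)

/-!
The coefficient of `X^(n+1)` in `g` is `1/(n+1)` times the coefficient of `X^n` in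
`exp (g ∘ g)`, and the latter is a polynomial with nonnegative coefficients in the coefficients
of `g` of degree at most `n`. Hence nonnegativity of the coefficients of `g` up to degree `n`
propagates to degree `n + 1`.
-/

namespace PowerSeries

section OrderedSemiring

variable {R : Type*} [CommSemiring R] [PartialOrder R] [IsOrderedRing R]

theorem coeff_mul_nonneg_of_le {f g : R⟦X⟧} {n : ℕ}
    (hf : ∀ i ≤ n, 0 ≤ coeff i f) (hg : ∀ i ≤ n, 0 ≤ coeff i g) :
    ∀ i ≤ n, 0 ≤ coeff i (f * g) := by
  intro i hi
  rw [coeff_mul]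
  refine Finset.sum_nonneg fun p hp => mul_nonneg (hf _ ?_) (hg _ ?_) <;>
    · rw [Finset.HasAntidiagonal.mem_antidiagonal] at hp
      omega

theorem coeff_pow_nonneg_of_le {f : R⟦X⟧} {n : ℕ} (hf : ∀ i ≤ n, 0 ≤ coeff i f) (k : ℕ) :
    ∀ i ≤ n, 0 ≤ coeff i (f ^ k) := by
  induction k with
  | zero =>
    intro i _
    rw [pow_zero, coeff_one]
    split_ifs <;> simp
  | succ k ih => exact pow_succ f k ▸ coeff_mul_nonneg_of_le ih hf

end OrderedSemiring

theorem coeff_compose (f g : ℝ⟦X⟧) (n : ℕ) :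
    coeff n (compose f g) = ∑ k ∈ Finset.range (n + 1), coeff k f * coeff n (g ^ k) := by
  simp [compose, coeff_C_mul]

theorem coeff_compose_nonneg_of_le {f g : ℝ⟦X⟧} {n : ℕ}
    (hf : ∀ i ≤ n, 0 ≤ coeff i f) (hg : ∀ i ≤ n, 0 ≤ coeff i g) :
    ∀ i ≤ n, 0 ≤ coeff i (compose f g) := by
  intro i hi
  rw [coeff_compose]
  refine Finset.sum_nonneg fun k hk => mul_nonneg (hf k ?_) (coeff_pow_nonneg_of_le hg k i hi)
  rw [Finset.mem_range] at hk
  omega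

theorem coeff_exp_nonneg (n : ℕ) : 0 ≤ coeff n (exp ℝ) := by
  rw [coeff_exp, map_div₀, map_one, map_natCast]
  positivity

theorem coeff_succ_nonneg_of_coeff_derivative_nonneg {g : ℝ⟦X⟧} {n : ℕ}
    (h : 0 ≤ coeff n (derivative ℝ g)) : 0 ≤ coeff (n + 1) g := by
  rw [coeff_derivative] at h
  exact nonneg_of_mul_nonneg_left h (by positivity)

end PowerSeries

theorem stmt_7_general (g : PowerSeries ℝ)
    (h0 : PowerSeries.constantCoeff g = 0)
    (hode : g.derivativeFun
      = PowerSeries.compose (PowerSeries.exp ℝ) (PowerSeries.compose g g)) :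
    ∀ n, 0 ≤ PowerSeries.coeff n g := by
  suffices h : ∀ n, ∀ i ≤ n, 0 ≤ coeff i g from fun n => h n n le_rfl
  intro n
  induction n with
  | zero =>
    intro i hi
    rw [Nat.le_zero.mp hi, coeff_zero_eq_constantCoeff_apply, h0]
  | succ m ih =>
    have hrhs : 0 ≤ coeff m (compose (exp ℝ) (compose g g)) :=
      coeff_compose_nonneg_of_le (fun i _ => coeff_exp_nonneg i)
        (coeff_compose_nonneg_of_le ih ih) m le_rfl
    rw [← hode] at hrhs
    have hnext : 0 ≤ coeff (m + 1) g := coeff_succ_nonneg_of_coeff_derivative_nonneg hrhs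
    intro i hi
    rcases Nat.le_succ_iff.mp hi with hi | rfl
    · exact ih i hi
    · exact hnext

/-- The formal power series solution `g = X + X²/2 + X³/2 + ⋯` of the formal equation
`g' = exp (g ∘ g)`, `g(0) = 0`, has all coefficients nonnegative. -/
theorem stmt_7 (g : PowerSeries ℝ)
    (h0 : PowerSeries.constantCoeff g = 0)
    (h1 : PowerSeries.coeff 1 g = 1)
    (hode : g.derivativeFun
      = PowerSeries.compose (PowerSeries.exp ℝ) (PowerSeries.compose g g)) :
    ∀ n, 0 ≤ PowerSeries.coeff n g :=
  stmt_7_general g h0 hode
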